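/- Let α ∈ (0,1), c > 0, κ > 0 and suppose ∫_ℝ |K_α| < 1. Define K_α^{*1} := K_α and K_α^{*(j+1)} := K_α * K_α^{*j}, and set G(ξ) := K₀(ξ) + Σ_{j=1}^∞ (K₀ * K_α^{*j})(ξ). Then this series converges uniformly on ℝ, G is continuous and integrable on ℝ, and ∫_ℝ G(ξ) dξ = 1/κ². -/

import Mathlib

open Real MeasureTheory Filter Topology

/-- The kernel K₀(ξ) = e^{-κ|ξ|}/(2κ). -/
noncomputable def K0 (κ ξ : ℝ) : ℝ := Real.exp (-κ * |ξ|) / (2 * κ)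

/-- The (a.e.) derivative of K₀: K₀'(x) = -sign(x) e^{-κ|x|}/2. -/
noncomputable def K0d (κ x : ℝ) : ℝ := -Real.sign x * Real.exp (-κ * |x|) / 2

/-- The kernel K_α(ξ) = -(c^α/Γ(1-α)) ∫₀^∞ K₀'(ξ-s) s^{-α} ds. -/
noncomputable def Kalpha (α c κ ξ : ℝ) : ℝ :=
  -(c ^ α / Real.Gamma (1 - α)) * ∫ s in Set.Ioi (0 : ℝ), K0d κ (ξ - s) / s ^ α

/-- Convolution (K * g)(ξ) = ∫ K(ξ-y) g(y) dy. -/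
noncomputable def conv (K g : ℝ → ℝ) (ξ : ℝ) : ℝ := ∫ y, K (ξ - y) * g y

/-- The iterated convolutions of `K_α`: `Kiter α c κ n = K_α^{*(n+1)}`. -/
noncomputable def Kiter (α c κ : ℝ) : ℕ → ℝ → ℝ
  | 0 => Kalpha α c κ
  | n + 1 => conv (Kalpha α c κ) (Kiter α c κ n)

/-- The Green's function G(ξ) = K₀(ξ) + Σ_{j=1}^∞ (K₀ * K_α^{*j})(ξ). -/
noncomputable def Gker (α c κ : ℝ) (ξ : ℝ) : ℝ :=
  K0 κ ξ + ∑' j : ℕ, conv (K0 κ) (Kiter α c κ j) ξ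


/-!
Fubini turns the defining integral of `K_α` into Marchaud's form
`K_α(ξ) = -(c^α α / Γ(1-α)) ∫₀^∞ (K₀(ξ) - K₀(ξ - t)) t^{-1-α} dt`. Since
`ξ ↦ K₀(ξ) - K₀(ξ - t)` has `L¹` norm `O(t)` for small `t` and `O(1)` for large `t`, this double
integral converges absolutely, so `K_α` is integrable and, by translation invariance, `∫ K_α = 0`.
Young's inequality gives `‖K_α^{*j}‖₁ ≤ ‖K_α‖₁^j` and `∫ K₀ * K_α^{*j} = 0`, while
`|K₀ * K_α^{*j}| ≤ ‖K₀‖_∞ ‖K_α‖₁^j`. As `‖K_α‖₁ < 1`, the series converges uniformly and in `L¹`,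
and `∫ G = ∫ K₀ = 1/κ²`.
-/

open Set

lemma Real.measurable_sign : Measurable Real.sign := by
  unfold Real.sign
  exact Measurable.ite (measurableSet_lt measurable_id measurable_const) measurable_const
    (Measurable.ite (measurableSet_lt measurable_const measurable_id) measurable_const
      measurable_const)

lemma Real.exp_neg_mul_abs_sub_le {κ : ℝ} (hκ : 0 ≤ κ) (x y : ℝ) :
    Real.exp (-κ * |x - y|) ≤ Real.exp (κ * |y|) * Real.exp (-κ * |x|) := by
  rw [← Real.exp_add, Real.exp_le_exp]
  nlinarith [abs_sub_abs_le_abs_sub x y]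

section K0

variable {κ : ℝ}

lemma continuous_K0 (κ : ℝ) : Continuous (K0 κ) := by
  unfold K0
  fun_prop

lemma K0_nonneg (hκ : 0 ≤ κ) (ξ : ℝ) : 0 ≤ K0 κ ξ := by
  unfold K0
  positivity

lemma abs_K0_le (hκ : 0 ≤ κ) (ξ : ℝ) : |K0 κ ξ| ≤ 1 / (2 * κ) := by
  rw [abs_of_nonneg (K0_nonneg hκ ξ)]
  unfold K0
  gcongr
  exact Real.exp_le_one_iff.mpr (by nlinarith [abs_nonneg ξ])

lemma integral_K0 (hκ : 0 < κ) : ∫ ξ, K0 κ ξ = 1 / κ ^ 2 := by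
  have h : ∫ ξ, K0 κ ξ = 2 * ∫ x in Ioi 0, Real.exp (-κ * x) / (2 * κ) :=
    integral_comp_abs (f := fun x => Real.exp (-κ * x) / (2 * κ))
  rw [h, integral_div, integral_exp_mul_Ioi (neg_lt_zero.mpr hκ) 0]
  field_simp
  simp

lemma integrable_K0 (hκ : 0 < κ) : Integrable (K0 κ) :=
  .of_integral_ne_zero (by rw [integral_K0 hκ]; positivity)

lemma integral_abs_K0 (hκ : 0 < κ) : ∫ ξ, |K0 κ ξ| = 1 / κ ^ 2 := by
  simp_rw [abs_of_nonneg (K0_nonneg hκ.le _), integral_K0 hκ]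

lemma hasDerivAt_K0 (hκ : κ ≠ 0) {x : ℝ} (hx : x ≠ 0) : HasDerivAt (K0 κ) (K0d κ x) x := by
  refine ((((hasDerivAt_abs hx).const_mul (-κ)).exp).div_const (2 * κ)).congr_deriv ?_
  unfold K0d
  rcases hx.lt_or_gt with h | h
  · simp [Real.sign_of_neg h, h]
    field_simp
  · simp [Real.sign_of_pos h, h]
    field_simp

lemma measurable_K0d (κ : ℝ) : Measurable (K0d κ) := by
  unfold K0d
  exact (Real.measurable_sign.neg.mul (by fun_prop)).div_const _

lemma abs_K0d_le (κ x : ℝ) : |K0d κ x| ≤ Real.exp (-κ * |x|) / 2 := by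
  unfold K0d
  rw [abs_div, abs_mul, abs_neg, abs_of_pos (Real.exp_pos _), abs_two]
  have : |Real.sign x| ≤ 1 := by
    rcases Real.sign_apply_eq x with h | h | h <;> simp [h]
  gcongr
  nlinarith [Real.exp_pos (-κ * |x|)]

lemma integral_K0d (hκ : κ ≠ 0) (a b : ℝ) : ∫ u in a..b, K0d κ u = K0 κ b - K0 κ a := by
  refine integral_eq_of_hasDerivAt_off_countable _ _ (countable_singleton 0)
    (continuous_K0 κ).continuousOn (fun x hx => hasDerivAt_K0 hκ hx.2) ?_
  have hdom : Continuous fun x : ℝ => Real.exp (-κ * |x|) / 2 := by fun_prop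
  exact (hdom.intervalIntegrable a b).mono_fun' (measurable_K0d κ).aestronglyMeasurable
    (ae_of_all _ (abs_K0d_le κ))

lemma abs_K0_sub_K0_le (hκ : 0 < κ) (ξ : ℝ) {t : ℝ} (ht : 0 ≤ t) :
    |K0 κ ξ - K0 κ (ξ - t)| ≤ t * Real.exp (κ * t) / 2 * Real.exp (-κ * |ξ|) := by
  rw [← integral_K0d hκ.ne']
  have hbound : ∀ u ∈ uIoc (ξ - t) ξ, ‖K0d κ u‖ ≤ Real.exp (κ * t) / 2 * Real.exp (-κ * |ξ|) := by
    intro u hu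
    rw [uIoc_of_le (by linarith)] at hu
    have hdist : |ξ - u| ≤ t := abs_le.mpr ⟨by linarith [hu.2], by linarith [hu.1]⟩
    calc ‖K0d κ u‖ ≤ Real.exp (-κ * |ξ - (ξ - u)|) / 2 := by
          simpa using abs_K0d_le κ u
      _ ≤ Real.exp (κ * |ξ - u|) * Real.exp (-κ * |ξ|) / 2 := by
          gcongr
          exact Real.exp_neg_mul_abs_sub_le hκ.le ξ (ξ - u)
      _ ≤ Real.exp (κ * t) / 2 * Real.exp (-κ * |ξ|) := by
          rw [div_mul_eq_mul_div]
          gcongr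
  calc |∫ u in (ξ - t)..ξ, K0d κ u|
      ≤ Real.exp (κ * t) / 2 * Real.exp (-κ * |ξ|) * |ξ - (ξ - t)| :=
        intervalIntegral.norm_integral_le_of_norm_le_const hbound
    _ = t * Real.exp (κ * t) / 2 * Real.exp (-κ * |ξ|) := by
        rw [sub_sub_cancel, abs_of_nonneg ht]
        ring

lemma integral_abs_K0_sub_K0_le (hκ : 0 < κ) {t : ℝ} (ht : t ∈ Ioc 0 1) :
    ∫ ξ, |K0 κ ξ - K0 κ (ξ - t)| ≤ Real.exp κ / κ * t := by
  have hexp : ∀ ξ, Real.exp (-κ * |ξ|) = 2 * κ * K0 κ ξ := fun ξ => by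
    unfold K0
    field_simp
  calc ∫ ξ, |K0 κ ξ - K0 κ (ξ - t)|
      ≤ ∫ ξ, t * Real.exp (κ * t) / 2 * Real.exp (-κ * |ξ|) := by
        refine integral_mono ((integrable_K0 hκ).sub ((integrable_K0 hκ).comp_sub_right t)).abs
          ?_ fun ξ => abs_K0_sub_K0_le hκ ξ ht.1.le
        simp_rw [hexp]
        exact ((integrable_K0 hκ).const_mul _).const_mul _
    _ = Real.exp (κ * t) / κ * t := by
        simp_rw [hexp, integral_const_mul, integral_K0 hκ]
        field_simp
    _ ≤ Real.exp κ / κ * t := by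
        have : κ * t ≤ κ := by nlinarith [ht.2]
        gcongr
        exact ht.1.le

end K0

section Marchaud

variable {α : ℝ}

lemma setIntegral_Ioi_indicator_rpow (hα : 0 < α) {s : ℝ} (hs : 0 < s) :
    ∫ t in Ioi (0 : ℝ), (Ioi s).indicator (fun t => t ^ (-1 - α)) t = s ^ (-α) / α := by
  rw [setIntegral_indicator measurableSet_Ioi, Ioi_inter_Ioi, max_eq_right hs.le,
    integral_Ioi_rpow_of_lt (by linarith) hs]
  rw [show -1 - α + 1 = -α by ring]
  field_simp

lemma integrable_indicator_mul_rpow (hα : 0 < α) {g : ℝ → ℝ} (hgm : Measurable g)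
    (hg : IntegrableOn (fun s => g s * s ^ (-α)) (Ioi 0)) :
    Integrable (Function.uncurry fun s t => g s * (Ioi s).indicator (fun t => t ^ (-1 - α)) t)
      ((volume.restrict (Ioi 0)).prod (volume.restrict (Ioi 0))) := by
  have hm : Measurable (Function.uncurry fun s t =>
      g s * (Ioi s).indicator (fun t : ℝ => t ^ (-1 - α)) t) :=
    (hgm.comp measurable_fst).mul (Measurable.ite (measurableSet_lt measurable_fst
      measurable_snd) (measurable_snd.pow_const _) measurable_const)
  refine (integrable_prod_iff hm.aestronglyMeasurable).2 ⟨?_, ?_⟩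
  · filter_upwards [ae_restrict_mem measurableSet_Ioi] with s (hs : 0 < s)
    exact (((integrable_indicator_iff measurableSet_Ioi).2
      (integrableOn_Ioi_rpow_of_lt (by linarith) hs)).restrict).const_mul (g s)
  · refine (hg.norm.div_const α).congr ?_
    filter_upwards [ae_restrict_mem measurableSet_Ioi] with s (hs : 0 < s)
    have hnorm : ∀ t, ‖g s * (Ioi s).indicator (fun t : ℝ => t ^ (-1 - α)) t‖
        = ‖g s‖ * (Ioi s).indicator (fun t => t ^ (-1 - α)) t := fun t => by
      rw [norm_mul, Real.norm_of_nonneg (indicator_nonneg (fun t ht =>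
        Real.rpow_nonneg (hs.trans (mem_Ioi.mp ht)).le _) t)]
    simp_rw [Function.uncurry_apply_pair, hnorm, integral_const_mul,
      setIntegral_Ioi_indicator_rpow hα hs, norm_mul,
      Real.norm_of_nonneg (Real.rpow_nonneg hs.le (-α))]
    ring

lemma setIntegral_Ioi_mul_rpow_eq (hα : 0 < α) {g : ℝ → ℝ} (hgm : Measurable g)
    (hg : IntegrableOn (fun s => g s * s ^ (-α)) (Ioi 0)) :
    ∫ s in Ioi 0, g s * s ^ (-α) = α * ∫ t in Ioi 0, (∫ s in 0..t, g s) * t ^ (-1 - α) := by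
  -- both sides integrate `g s * t ^ (-1 - α)` over the region `0 < s < t`
  have hswap := integral_integral_swap (integrable_indicator_mul_rpow hα hgm hg)
  have hs : ∀ s ∈ Ioi (0 : ℝ),
      ∫ t in Ioi 0, g s * (Ioi s).indicator (fun t => t ^ (-1 - α)) t = g s * s ^ (-α) / α :=
    fun s hs => by rw [integral_const_mul, setIntegral_Ioi_indicator_rpow hα hs, mul_div_assoc]
  have ht : ∀ t ∈ Ioi (0 : ℝ), ∫ s in Ioi 0, g s * (Ioi s).indicator (fun t => t ^ (-1 - α)) t
      = (∫ s in 0..t, g s) * t ^ (-1 - α) := fun t (ht : 0 < t) => by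
    have : ∀ s, g s * (Ioi s).indicator (fun t => t ^ (-1 - α)) t
        = (Iio t).indicator g s * t ^ (-1 - α) := fun s => by
      by_cases h : s < t <;> simp [indicator, h]
    simp_rw [this, integral_mul_const, setIntegral_indicator measurableSet_Iio, Ioi_inter_Iio,
      intervalIntegral.integral_of_le ht.le, integral_Ioc_eq_integral_Ioo]
  calc ∫ s in Ioi 0, g s * s ^ (-α)
      = α * ∫ s in Ioi 0, ∫ t in Ioi 0, g s * (Ioi s).indicator (fun t => t ^ (-1 - α)) t := by
        rw [setIntegral_congr_fun measurableSet_Ioi hs, integral_div]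
        field_simp
    _ = α * ∫ t in Ioi 0, (∫ s in 0..t, g s) * t ^ (-1 - α) := by
        rw [hswap, setIntegral_congr_fun measurableSet_Ioi ht]

/-- Marchaud's form of the fractional derivative of order `α`, without the factor
`α / Γ(1 - α)`. -/
noncomputable def marchaud (α : ℝ) (f : ℝ → ℝ) (ξ : ℝ) : ℝ :=
  ∫ t in Ioi (0 : ℝ), (f ξ - f (ξ - t)) * t ^ (-1 - α)

lemma integral_abs_sub_comp_sub_le {f : ℝ → ℝ} (hf : Integrable f) (t : ℝ) :
    ∫ ξ, |f ξ - f (ξ - t)| ≤ 2 * ∫ ξ, |f ξ| := by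
  calc ∫ ξ, |f ξ - f (ξ - t)| ≤ ∫ ξ, (|f ξ| + |f (ξ - t)|) :=
        integral_mono (hf.sub (hf.comp_sub_right t)).abs (hf.abs.add (hf.comp_sub_right t).abs)
          fun ξ => abs_sub _ _
    _ = 2 * ∫ ξ, |f ξ| := by
        rw [integral_add hf.abs (hf.comp_sub_right t).abs,
          integral_sub_right_eq_self (fun ξ => |f ξ|) t]
        ring

lemma integrableOn_Ioi_mul_rpow_of_le (hα0 : 0 < α) (hα1 : α < 1) {φ : ℝ → ℝ} {C D : ℝ}
    (hφm : AEStronglyMeasurable φ (volume.restrict (Ioi 0)))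
    (hsmall : ∀ t ∈ Ioc (0 : ℝ) 1, ‖φ t‖ ≤ C * t) (hlarge : ∀ t, ‖φ t‖ ≤ D) :
    IntegrableOn (fun t => φ t * t ^ (-1 - α)) (Ioi 0) := by
  have hm : AEStronglyMeasurable (fun t => φ t * t ^ (-1 - α)) (volume.restrict (Ioi 0)) :=
    hφm.mul (measurable_id.pow_const _).aestronglyMeasurable
  have hnorm : ∀ t ∈ Ioi (0 : ℝ), ‖φ t * t ^ (-1 - α)‖ = ‖φ t‖ * t ^ (-1 - α) := fun t ht => by
    rw [norm_mul, Real.norm_of_nonneg (Real.rpow_nonneg (le_of_lt ht) _)]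
  rw [← Ioc_union_Ioi_eq_Ioi zero_le_one]
  refine IntegrableOn.union ?_ ?_
  · refine Integrable.mono' (g := fun t => C * t ^ (-α))
      ((intervalIntegral.intervalIntegrable_rpow' (by linarith)).1.const_mul C)
      (hm.mono_set Ioc_subset_Ioi_self) ?_
    filter_upwards [ae_restrict_mem measurableSet_Ioc] with t ht
    rw [hnorm t ht.1, show -α = 1 + (-1 - α) by ring, Real.rpow_one_add' ht.1.le (by linarith),
      ← mul_assoc]
    exact mul_le_mul_of_nonneg_right (hsmall t ht) (Real.rpow_nonneg ht.1.le _)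
  · refine Integrable.mono' (g := fun t => D * t ^ (-1 - α))
      ((integrableOn_Ioi_rpow_of_lt (by linarith) one_pos).const_mul D)
      (hm.mono_set (Ioi_subset_Ioi zero_le_one)) ?_
    filter_upwards [ae_restrict_mem measurableSet_Ioi] with t (ht : 1 < t)
    rw [hnorm t (zero_lt_one.trans ht)]
    exact mul_le_mul_of_nonneg_right (hlarge t) (Real.rpow_nonneg (zero_le_one.trans ht.le) _)

lemma integrable_marchaud_integrand (hα0 : 0 < α) (hα1 : α < 1) {f : ℝ → ℝ} (hfm : Measurable f)
    (hfi : Integrable f) {C : ℝ} (hmod : ∀ t ∈ Ioc (0 : ℝ) 1, ∫ ξ, |f ξ - f (ξ - t)| ≤ C * t) :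
    Integrable (Function.uncurry fun t ξ => (f ξ - f (ξ - t)) * t ^ (-1 - α))
      ((volume.restrict (Ioi 0)).prod volume) := by
  have hdiff : Measurable fun p : ℝ × ℝ => f p.2 - f (p.2 - p.1) :=
    (hfm.comp measurable_snd).sub (hfm.comp (measurable_snd.sub measurable_fst))
  have hm : Measurable (Function.uncurry fun t ξ => (f ξ - f (ξ - t)) * t ^ (-1 - α)) :=
    hdiff.mul (measurable_fst.pow_const _)
  refine (integrable_prod_iff hm.aestronglyMeasurable).2
    ⟨ae_of_all _ fun t => ((hfi.sub (hfi.comp_sub_right t)).mul_const (t ^ (-1 - α)) :), ?_⟩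
  have hφm : AEStronglyMeasurable (fun t => ∫ ξ, |f ξ - f (ξ - t)|) (volume.restrict (Ioi 0)) :=
    hdiff.abs.aestronglyMeasurable.integral_prod_right'
  have hφ : ∀ t, ‖∫ ξ, |f ξ - f (ξ - t)|‖ = ∫ ξ, |f ξ - f (ξ - t)| := fun t =>
    Real.norm_of_nonneg (integral_nonneg fun _ => abs_nonneg _)
  refine (integrableOn_Ioi_mul_rpow_of_le hα0 hα1 hφm (fun t ht => (hφ t).trans_le (hmod t ht))
    (fun t => (hφ t).trans_le (integral_abs_sub_comp_sub_le hfi t))).congr ?_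
  filter_upwards [ae_restrict_mem measurableSet_Ioi] with t (ht : 0 < t)
  simp_rw [Function.uncurry_apply_pair, norm_mul, Real.norm_eq_abs,
    abs_of_nonneg (Real.rpow_nonneg ht.le (-1 - α)), integral_mul_const]

lemma integrable_marchaud (hα0 : 0 < α) (hα1 : α < 1) {f : ℝ → ℝ} (hfm : Measurable f)
    (hfi : Integrable f) {C : ℝ} (hmod : ∀ t ∈ Ioc (0 : ℝ) 1, ∫ ξ, |f ξ - f (ξ - t)| ≤ C * t) :
    Integrable (marchaud α f) :=
  (integrable_marchaud_integrand hα0 hα1 hfm hfi hmod).integral_prod_right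

lemma integral_marchaud (hα0 : 0 < α) (hα1 : α < 1) {f : ℝ → ℝ} (hfm : Measurable f)
    (hfi : Integrable f) {C : ℝ} (hmod : ∀ t ∈ Ioc (0 : ℝ) 1, ∫ ξ, |f ξ - f (ξ - t)| ≤ C * t) :
    ∫ ξ, marchaud α f ξ = 0 := by
  have hzero : ∀ t, ∫ ξ, (f ξ - f (ξ - t)) * t ^ (-1 - α) = 0 := fun t => by
    rw [integral_mul_const, integral_sub hfi (hfi.comp_sub_right t),
      integral_sub_right_eq_self f t, sub_self, zero_mul]
  unfold marchaud
  rw [← integral_integral_swap (integrable_marchaud_integrand hα0 hα1 hfm hfi hmod)]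
  simp_rw [hzero, integral_zero]

end Marchaud

section Kalpha

variable {α κ : ℝ}

lemma integrableOn_K0d_sub_mul_rpow (hα1 : α < 1) (hκ : 0 < κ) (ξ : ℝ) :
    IntegrableOn (fun s => K0d κ (ξ - s) * s ^ (-α)) (Ioi 0) := by
  have hdom : IntegrableOn
      (fun s => Real.exp (κ * |ξ|) / 2 * (s ^ (-α) * Real.exp (-κ * s ^ (1 : ℝ)))) (Ioi 0) :=
    (integrableOn_rpow_mul_exp_neg_mul_rpow (by linarith) one_pos hκ).const_mul _
  refine hdom.mono' (((measurable_K0d κ).comp (measurable_const.sub measurable_id)).mul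
    (measurable_id.pow_const _)).aestronglyMeasurable ?_
  filter_upwards [ae_restrict_mem measurableSet_Ioi] with s (hs : 0 < s)
  have hK0d : |K0d κ (ξ - s)| ≤ Real.exp (κ * |ξ|) / 2 * Real.exp (-κ * s) :=
    calc |K0d κ (ξ - s)| ≤ Real.exp (-κ * |s - ξ|) / 2 := by
          rw [abs_sub_comm]
          exact abs_K0d_le κ _
      _ ≤ Real.exp (κ * |ξ|) * Real.exp (-κ * |s|) / 2 := by
          gcongr
          exact Real.exp_neg_mul_abs_sub_le hκ.le s ξ
      _ = Real.exp (κ * |ξ|) / 2 * Real.exp (-κ * s) := by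
          rw [abs_of_pos hs]
          ring
  rw [norm_mul, Real.norm_eq_abs, Real.norm_of_nonneg (Real.rpow_nonneg hs.le _), Real.rpow_one]
  calc |K0d κ (ξ - s)| * s ^ (-α)
      ≤ Real.exp (κ * |ξ|) / 2 * Real.exp (-κ * s) * s ^ (-α) :=
        mul_le_mul_of_nonneg_right hK0d (Real.rpow_nonneg hs.le _)
    _ = Real.exp (κ * |ξ|) / 2 * (s ^ (-α) * Real.exp (-κ * s)) := by ring

lemma Kalpha_eq_mul_marchaud (hα0 : 0 < α) (hα1 : α < 1) (hκ : 0 < κ) (c : ℝ) :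
    Kalpha α c κ = fun ξ => -(c ^ α / Real.Gamma (1 - α)) * α * marchaud α (K0 κ) ξ := by
  funext ξ
  have hprimitive : ∀ t, ∫ s in 0..t, K0d κ (ξ - s) = K0 κ ξ - K0 κ (ξ - t) := fun t => by
    rw [intervalIntegral.integral_comp_sub_left, sub_zero, integral_K0d hκ.ne']
  have hfubini := setIntegral_Ioi_mul_rpow_eq hα0 (g := fun s => K0d κ (ξ - s))
    ((measurable_K0d κ).comp (measurable_const.sub measurable_id))
    (integrableOn_K0d_sub_mul_rpow hα1 hκ ξ)
  simp_rw [hprimitive] at hfubini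
  have hdiv : ∫ s in Ioi (0 : ℝ), K0d κ (ξ - s) / s ^ α
      = ∫ s in Ioi 0, K0d κ (ξ - s) * s ^ (-α) :=
    setIntegral_congr_fun measurableSet_Ioi fun s hs => by
      rw [Real.rpow_neg (le_of_lt hs), div_eq_mul_inv]
  rw [Kalpha, hdiv, hfubini, marchaud]
  ring

lemma integrable_Kalpha (hα0 : 0 < α) (hα1 : α < 1) (hκ : 0 < κ) (c : ℝ) :
    Integrable (Kalpha α c κ) := by
  rw [Kalpha_eq_mul_marchaud hα0 hα1 hκ]
  exact (integrable_marchaud hα0 hα1 (continuous_K0 κ).measurable (integrable_K0 hκ)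
    fun t ht => integral_abs_K0_sub_K0_le hκ ht).const_mul _

lemma integral_Kalpha (hα0 : 0 < α) (hα1 : α < 1) (hκ : 0 < κ) (c : ℝ) :
    ∫ ξ, Kalpha α c κ ξ = 0 := by
  rw [Kalpha_eq_mul_marchaud hα0 hα1 hκ, integral_const_mul,
    integral_marchaud hα0 hα1 (continuous_K0 κ).measurable (integrable_K0 hκ)
      fun t ht => integral_abs_K0_sub_K0_le hκ ht, mul_zero]

end Kalpha

section Conv

variable {f g : ℝ → ℝ}

lemma conv_eq_convolution (f g : ℝ → ℝ) :
    conv f g = convolution f g (ContinuousLinearMap.mul ℝ ℝ) volume := by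
  funext x
  exact (convolution_mul_swap (μ := volume)).symm

lemma integrable_conv (hf : Integrable f) (hg : Integrable g) : Integrable (conv f g) := by
  rw [conv_eq_convolution]
  exact hf.integrable_convolution _ hg

lemma integral_conv (hf : Integrable f) (hg : Integrable g) :
    ∫ x, conv f g x = (∫ x, f x) * ∫ x, g x := by
  rw [conv_eq_convolution]
  exact integral_convolution _ hf hg

lemma continuous_conv (hf : Continuous f) (hbdd : BddAbove (range fun x => ‖f x‖))
    (hg : Integrable g) : Continuous (conv f g) := by
  rw [conv_eq_convolution]
  exact hbdd.continuous_convolution_left_of_integrable _ hf hg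

lemma abs_conv_le {M : ℝ} (hf : ∀ x, |f x| ≤ M) (hg : Integrable g) (ξ : ℝ) :
    |conv f g ξ| ≤ M * ∫ y, |g y| := by
  rw [← integral_const_mul]
  refine norm_integral_le_of_norm_le (f := fun y => f (ξ - y) * g y) (hg.abs.const_mul M)
    (ae_of_all _ fun y => ?_)
  rw [norm_mul, Real.norm_eq_abs, Real.norm_eq_abs]
  exact mul_le_mul_of_nonneg_right (hf _) (abs_nonneg _)

lemma integral_abs_conv_le (hf : Integrable f) (hg : Integrable g) :
    ∫ x, |conv f g x| ≤ (∫ x, |f x|) * ∫ x, |g x| := by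
  rw [← integral_conv hf.abs hg.abs]
  refine integral_mono (integrable_conv hf hg).abs (integrable_conv hf.abs hg.abs) fun x => ?_
  simpa only [conv, abs_mul] using abs_integral_le_integral_abs (f := fun y => f (x - y) * g y)

end Conv

lemma integrable_tsum_of_summable_integral_norm {X E ι : Type*} [MeasurableSpace X]
    {μ : Measure X} [NormedAddCommGroup E] [Countable ι] {F : ι → X → E}
    (hF_int : ∀ i, Integrable (F i) μ) (hF_sum : Summable fun i => ∫ x, ‖F i x‖ ∂μ)
    (hmeas : AEStronglyMeasurable (fun x => ∑' i, F i x) μ) :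
    Integrable (fun x => ∑' i, F i x) μ := by
  refine ⟨hmeas, ?_⟩
  calc ∫⁻ x, ‖∑' i, F i x‖ₑ ∂μ
      ≤ ∫⁻ x, ∑' i, ‖F i x‖ₑ ∂μ := lintegral_mono fun x => enorm_tsum_le_tsum_enorm
    _ = ∑' i, ∫⁻ x, ‖F i x‖ₑ ∂μ := lintegral_tsum fun i => (hF_int i).1.enorm
    _ = ∑' i, ENNReal.ofReal (∫ x, ‖F i x‖ ∂μ) := by
        simp_rw [ofReal_integral_norm_eq_lintegral_enorm (hF_int _)]
    _ = ENNReal.ofReal (∑' i, ∫ x, ‖F i x‖ ∂μ) :=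
        (ENNReal.ofReal_tsum_of_nonneg (fun i => integral_nonneg fun _ => norm_nonneg _)
          hF_sum).symm
    _ < ⊤ := ENNReal.ofReal_lt_top

section Kiter

variable {α c κ : ℝ}

lemma integrable_Kiter (hα0 : 0 < α) (hα1 : α < 1) (hκ : 0 < κ) :
    ∀ n, Integrable (Kiter α c κ n)
  | 0 => integrable_Kalpha hα0 hα1 hκ c
  | n + 1 => integrable_conv (integrable_Kalpha hα0 hα1 hκ c) (integrable_Kiter hα0 hα1 hκ n)

lemma integral_Kiter (hα0 : 0 < α) (hα1 : α < 1) (hκ : 0 < κ) (n : ℕ) :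
    ∫ ξ, Kiter α c κ n ξ = 0 := by
  cases n with
  | zero => exact integral_Kalpha hα0 hα1 hκ c
  | succ n =>
    rw [Kiter, integral_conv (integrable_Kalpha hα0 hα1 hκ c) (integrable_Kiter hα0 hα1 hκ n),
      integral_Kalpha hα0 hα1 hκ c, zero_mul]

lemma integral_abs_Kiter_le (hα0 : 0 < α) (hα1 : α < 1) (hκ : 0 < κ) :
    ∀ n, ∫ ξ, |Kiter α c κ n ξ| ≤ (∫ ξ, |Kalpha α c κ ξ|) ^ (n + 1)
  | 0 => by simp [Kiter]
  | n + 1 => by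
    rw [pow_succ']
    exact (integral_abs_conv_le (integrable_Kalpha hα0 hα1 hκ c)
      (integrable_Kiter hα0 hα1 hκ n)).trans
      (mul_le_mul_of_nonneg_left (integral_abs_Kiter_le hα0 hα1 hκ n)
        (integral_nonneg fun _ => abs_nonneg _))

end Kiter

section Green

variable {α c κ : ℝ}

lemma continuous_conv_K0 (hκ : 0 ≤ κ) {g : ℝ → ℝ} (hg : Integrable g) :
    Continuous (conv (K0 κ) g) :=
  continuous_conv (continuous_K0 κ) ⟨1 / (2 * κ), forall_mem_range.2 (abs_K0_le hκ)⟩ hg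

lemma abs_conv_K0_Kiter_le (hα0 : 0 < α) (hα1 : α < 1) (hκ : 0 < κ) (j : ℕ) (ξ : ℝ) :
    |conv (K0 κ) (Kiter α c κ j) ξ| ≤ 1 / (2 * κ) * (∫ ξ, |Kalpha α c κ ξ|) ^ (j + 1) :=
  (abs_conv_le (abs_K0_le hκ.le) (integrable_Kiter hα0 hα1 hκ j) ξ).trans
    (mul_le_mul_of_nonneg_left (integral_abs_Kiter_le hα0 hα1 hκ j) (by positivity))

lemma integral_abs_conv_K0_Kiter_le (hα0 : 0 < α) (hα1 : α < 1) (hκ : 0 < κ) (j : ℕ) :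
    ∫ ξ, |conv (K0 κ) (Kiter α c κ j) ξ| ≤ 1 / κ ^ 2 * (∫ ξ, |Kalpha α c κ ξ|) ^ (j + 1) := by
  refine (integral_abs_conv_le (integrable_K0 hκ) (integrable_Kiter hα0 hα1 hκ j)).trans ?_
  rw [integral_abs_K0 hκ]
  exact mul_le_mul_of_nonneg_left (integral_abs_Kiter_le hα0 hα1 hκ j) (by positivity)

lemma integral_conv_K0_Kiter (hα0 : 0 < α) (hα1 : α < 1) (hκ : 0 < κ) (j : ℕ) :
    ∫ ξ, conv (K0 κ) (Kiter α c κ j) ξ = 0 := by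
  rw [integral_conv (integrable_K0 hκ) (integrable_Kiter hα0 hα1 hκ j),
    integral_Kiter hα0 hα1 hκ j, mul_zero]

end Green

theorem Gker_properties_general (α c κ : ℝ) (hα : α ∈ Set.Ioo (0 : ℝ) 1) (hκ : 0 < κ)
    (hK : (∫ ξ, |Kalpha α c κ ξ|) < 1) :
    TendstoUniformly
      (fun (N : ℕ) (ξ : ℝ) => K0 κ ξ + ∑ j ∈ Finset.range N, conv (K0 κ) (Kiter α c κ j) ξ)
      (Gker α c κ) atTop ∧
    Continuous (Gker α c κ) ∧ Integrable (Gker α c κ) ∧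
    (∫ ξ, Gker α c κ ξ) = 1 / κ ^ 2 := by
  obtain ⟨hα0, hα1⟩ := hα
  set f : ℕ → ℝ → ℝ := fun j => conv (K0 κ) (Kiter α c κ j)
  have hgeom : Summable fun j : ℕ => (∫ ξ, |Kalpha α c κ ξ|) ^ (j + 1) :=
    (summable_nat_add_iff 1).2
      (summable_geometric_of_lt_one (integral_nonneg fun _ => abs_nonneg _) hK)
  have hfint : ∀ j, Integrable (f j) := fun j =>
    integrable_conv (integrable_K0 hκ) (integrable_Kiter hα0 hα1 hκ j)
  have hsup := abs_conv_K0_Kiter_le (c := c) hα0 hα1 hκ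
  have hL1 : Summable fun j => ∫ ξ, ‖f j ξ‖ :=
    (hgeom.mul_left (1 / κ ^ 2)).of_nonneg_of_le (fun _ => integral_nonneg fun _ => norm_nonneg _)
      (integral_abs_conv_K0_Kiter_le hα0 hα1 hκ)
  have hcont : Continuous fun ξ => ∑' j, f j ξ :=
    continuous_tsum (fun j => continuous_conv_K0 hκ.le (integrable_Kiter hα0 hα1 hκ j))
      (hgeom.mul_left _) hsup
  have hint : Integrable fun ξ => ∑' j, f j ξ :=
    integrable_tsum_of_summable_integral_norm hfint hL1 hcont.aestronglyMeasurable
  have hK0 : TendstoUniformly (fun (_ : ℕ) => K0 κ) (K0 κ) atTop := fun _ hu =>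
    Eventually.of_forall fun _ _ => refl_mem_uniformity hu
  refine ⟨hK0.add (tendstoUniformly_tsum_nat (hgeom.mul_left _) hsup),
    (continuous_K0 κ).add hcont, (integrable_K0 hκ).add hint, ?_⟩
  calc ∫ ξ, Gker α c κ ξ = (∫ ξ, K0 κ ξ) + ∫ ξ, ∑' j, f j ξ :=
      integral_add (integrable_K0 hκ) hint
    _ = 1 / κ ^ 2 := by
        rw [← integral_tsum_of_summable_integral_norm hfint hL1, integral_K0 hκ]
        simp only [f, integral_conv_K0_Kiter hα0 hα1 hκ, tsum_zero, add_zero]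

/-- If `‖K_α‖_{L¹} < 1`, the series defining `G` converges uniformly on ℝ, `G` is
continuous and integrable, and `∫ G = 1/κ²`. -/
theorem Gker_properties (α c κ : ℝ) (hα : α ∈ Set.Ioo (0 : ℝ) 1) (hc : 0 < c) (hκ : 0 < κ)
    (hK : (∫ ξ, |Kalpha α c κ ξ|) < 1) :
    TendstoUniformly
      (fun (N : ℕ) (ξ : ℝ) => K0 κ ξ + ∑ j ∈ Finset.range N, conv (K0 κ) (Kiter α c κ j) ξ)
      (Gker α c κ) atTop ∧
    Continuous (Gker α c κ) ∧ Integrable (Gker α c κ) ∧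
    (∫ ξ, Gker α c κ ξ) = 1 / κ ^ 2 :=
  Gker_properties_general α c κ hα hκ hK
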